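/- Let n ≥ 1, let X₁, …, Xₙ be fixed points of a set 𝔛, and let 𝔉 be a nonempty class of functions f : 𝔛 → [0, 1/2] that contains the zero function. Define the empirical Rademacher complexity ℜ(𝔉) = 2^{−n} Σ_{ε∈{−1,1}^n} sup_{f∈𝔉} (1/n) Σ_{i=1}^n ε_i f(X_i), and for ε > 0 let N(ε) be the smallest cardinality of a subset 𝒯 of the image set S = {(f(X₁), …, f(Xₙ)) : f ∈ 𝔉} ⊆ ℝⁿ such that every point of S is within ℓ∞-distance ε of some point of 𝒯. Then for every ξ ∈ (0, 1/2): ℜ(𝔉) ≤ 4ξ + (12/√n) ∫_ξ^{1/2} √(log N(ε)) dε (the inequality being read in the extended reals if the integral is infinite). -/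

import Mathlib

open MeasureTheory

/-- The `ℓ∞`-covering number of a set `S ⊆ ℝⁿ` at resolution `ε`: the smallest cardinality of a
subset `𝒯 ⊆ S` such that every point of `S` is within `ℓ∞`-distance `ε` of some point of `𝒯`. -/
noncomputable def coverNum {n : ℕ} (S : Set (Fin n → ℝ)) (ε : ℝ) : ℕ :=
  sInf {k : ℕ | ∃ 𝒯 : Finset (Fin n → ℝ), ↑𝒯 ⊆ S ∧ 𝒯.card = k ∧
    ∀ x ∈ S, ∃ t ∈ 𝒯, ∀ i, |x i - t i| ≤ ε}

/-- The empirical Rademacher complexity of a function class `𝔉` on the sample `X₁, …, Xₙ`: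
the average over the `2ⁿ` sign vectors of the supremum of the signed empirical means. -/
noncomputable def empRademacher {𝔛 : Type*} {n : ℕ} (F : Set (𝔛 → ℝ)) (X : Fin n → 𝔛) : ℝ :=
  (1 / 2 ^ n) * ∑ e : Fin n → Bool,
    ⨆ f : F, (1 / (n : ℝ)) * ∑ i, (if e i then (1 : ℝ) else -1) * (f : 𝔛 → ℝ) (X i)


open Finset

lemma exp_avg_le {α : Type*} [Fintype α] [Nonempty α] (g : α → ℝ) :
    Real.exp ((1 / (Fintype.card α : ℝ)) * ∑ a, g a) ≤
      (1 / (Fintype.card α : ℝ)) * ∑ a, Real.exp (g a) := by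
  have hc : (0:ℝ) < (Fintype.card α : ℝ) := by
    exact_mod_cast Fintype.card_pos
  have h := convexOn_exp.map_sum_le (t := Finset.univ) (w := fun _ : α => 1 / (Fintype.card α : ℝ))
    (p := g) (fun _ _ => by positivity)
    (by rw [Finset.sum_const, Finset.card_univ, nsmul_eq_mul]; field_simp) (fun _ _ => Set.mem_univ _)
  simpa [Finset.mul_sum, smul_eq_mul] using h

set_option maxHeartbeats 1000000 in
lemma massart_mgf {n : ℕ} (T : Finset (Fin n → ℝ)) (hT : T.Nonempty) {B : ℝ}
    (hnorm : ∀ t ∈ T, (∑ i, (t i)^2) ≤ B^2) {l : ℝ} (hl : 0 < l) :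
    (1 / 2^n : ℝ) * ∑ e : Fin n → Bool,
      T.sup' hT (fun t => ∑ i, (if e i then (1:ℝ) else -1) * t i)
    ≤ Real.log T.card / l + l * B^2 / 2 := by
  classical
  set σ : Bool → ℝ := fun b => if b then (1:ℝ) else -1 with hσ
  set A : ℝ := (1 / 2^n : ℝ) * ∑ e : Fin n → Bool,
      T.sup' hT (fun t => ∑ i, σ (e i) * t i) with hA
  have hcard : (Fintype.card (Fin n → Bool) : ℝ) = 2^n := by
    simp [Fintype.card_fun]
  -- step 1: Jensen
  have h1 : Real.exp (l * A) ≤ (1 / 2^n : ℝ) * ∑ e : Fin n → Bool,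
      Real.exp (l * T.sup' hT (fun t => ∑ i, σ (e i) * t i)) := by
    have := exp_avg_le (α := Fin n → Bool)
      (fun e => l * T.sup' hT (fun t => ∑ i, σ (e i) * t i))
    rw [hcard] at this
    calc Real.exp (l * A) = Real.exp ((1/2^n : ℝ) * ∑ e : Fin n → Bool,
          l * T.sup' hT (fun t => ∑ i, σ (e i) * t i)) := by
            rw [hA, ← Finset.mul_sum]; congr 1; ring
      _ ≤ _ := this
  -- step 2: exp of sup ≤ sum of exps
  have h2 : ∀ e : Fin n → Bool, Real.exp (l * T.sup' hT (fun t => ∑ i, σ (e i) * t i))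
      ≤ ∑ t ∈ T, Real.exp (l * ∑ i, σ (e i) * t i) := by
    intro e
    obtain ⟨t₀, ht₀, heq⟩ := T.exists_mem_eq_sup' hT (fun t => ∑ i, σ (e i) * t i)
    rw [heq]
    apply Finset.single_le_sum (f := fun t => Real.exp (l * ∑ i, σ (e i) * t i))
      (fun t _ => (Real.exp_pos _).le) ht₀
  -- step 3: MGF product bound
  have h3 : ∀ t ∈ T, (∑ e : Fin n → Bool, Real.exp (l * ∑ i, σ (e i) * t i))
      ≤ 2^n * Real.exp (l^2 * B^2 / 2) := by
    intro t ht
    have hprod : (∑ e : Fin n → Bool, Real.exp (l * ∑ i, σ (e i) * t i))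
        = ∏ i : Fin n, (Real.exp (l * t i) + Real.exp (-(l * t i))) := by
      have : ∀ e : Fin n → Bool, Real.exp (l * ∑ i, σ (e i) * t i)
          = ∏ i : Fin n, Real.exp (l * (σ (e i) * t i)) := by
        intro e
        rw [← Real.exp_sum, ← Finset.mul_sum]
      have hswap : (∑ e : Fin n → Bool, ∏ i : Fin n, Real.exp (l * (σ (e i) * t i)))
          = ∏ i : Fin n, ∑ b : Bool, Real.exp (l * (σ b * t i)) :=
        (Fintype.prod_sum fun i b => Real.exp (l * (σ b * t i))).symm
      rw [Finset.sum_congr rfl (fun e _ => this e), hswap]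
      refine Finset.prod_congr rfl fun i _ => ?_
      rw [Fintype.sum_bool]
      simp only [hσ, if_true, if_false, Bool.false_eq_true]
      ring_nf
    rw [hprod]
    have hle : ∀ i : Fin n, Real.exp (l * t i) + Real.exp (-(l * t i))
        ≤ 2 * Real.exp ((l * t i)^2 / 2) := by
      intro i
      have := Real.cosh_le_exp_half_sq (l * t i)
      rw [Real.cosh_eq] at this
      linarith
    calc (∏ i : Fin n, (Real.exp (l * t i) + Real.exp (-(l * t i))))
        ≤ ∏ i : Fin n, 2 * Real.exp ((l * t i)^2 / 2) := by
          apply Finset.prod_le_prod (fun i _ => by positivity) (fun i _ => hle i)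
      _ = 2^n * Real.exp (∑ i, (l * t i)^2 / 2) := by
          rw [Finset.prod_mul_distrib, Finset.prod_const, Real.exp_sum]
          simp
      _ ≤ 2^n * Real.exp (l^2 * B^2 / 2) := by
          apply mul_le_mul_of_nonneg_left _ (by positivity)
          apply Real.exp_le_exp.2
          have h' : (∑ i, (l * t i)^2 / 2) = ∑ i, l^2 * (t i)^2 / 2 :=
            Finset.sum_congr rfl fun i _ => by ring
          rw [h', ← Finset.sum_div, ← Finset.mul_sum]
          have := hnorm t ht
          nlinarith [sq_nonneg l]
  -- combine
  have hM : (0:ℝ) < T.card := by exact_mod_cast hT.card_pos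
  have h4 : Real.exp (l * A) ≤ T.card * Real.exp (l^2 * B^2 / 2) := by
    calc Real.exp (l * A) ≤ (1 / 2^n : ℝ) * ∑ e : Fin n → Bool,
          ∑ t ∈ T, Real.exp (l * ∑ i, σ (e i) * t i) := by
          refine h1.trans ?_
          apply mul_le_mul_of_nonneg_left (Finset.sum_le_sum fun e _ => h2 e) (by positivity)
      _ = (1 / 2^n : ℝ) * ∑ t ∈ T, ∑ e : Fin n → Bool,
          Real.exp (l * ∑ i, σ (e i) * t i) := by rw [Finset.sum_comm]
      _ ≤ (1 / 2^n : ℝ) * ∑ t ∈ T, 2^n * Real.exp (l^2 * B^2 / 2) := by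
          apply mul_le_mul_of_nonneg_left (Finset.sum_le_sum h3) (by positivity)
      _ = T.card * Real.exp (l^2 * B^2 / 2) := by
          rw [Finset.sum_const, nsmul_eq_mul]
          field_simp
  have h5 : l * A ≤ Real.log T.card + l^2 * B^2 / 2 := by
    have := Real.log_le_log (Real.exp_pos _) h4
    rw [Real.log_exp, Real.log_mul (ne_of_gt hM) (Real.exp_ne_zero _), Real.log_exp] at this
    exact this
  calc A ≤ (Real.log T.card + l^2 * B^2/2) / l := by
        rw [le_div_iff₀ hl, mul_comm]; exact h5
    _ = Real.log T.card / l + l * B^2 / 2 := by field_simp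

lemma massart {n : ℕ} (T : Finset (Fin n → ℝ)) (hT : T.Nonempty) {B : ℝ} (hB : 0 < B)
    (hnorm : ∀ t ∈ T, (∑ i, (t i)^2) ≤ B^2) :
    (1 / 2^n : ℝ) * ∑ e : Fin n → Bool,
      T.sup' hT (fun t => ∑ i, (if e i then (1:ℝ) else -1) * t i)
    ≤ B * Real.sqrt (2 * Real.log T.card) := by
  rcases eq_or_lt_of_le (show 1 ≤ T.card from hT.card_pos) with h1 | h2
  · -- card = 1
    have hcard1 : (T.card : ℝ) = 1 := by exact_mod_cast h1.symm
    have hlog : Real.log (T.card : ℝ) = 0 := by rw [hcard1, Real.log_one]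
    have hle0 : (1 / 2^n : ℝ) * ∑ e : Fin n → Bool,
        T.sup' hT (fun t => ∑ i, (if e i then (1:ℝ) else -1) * t i) ≤ 0 := by
      apply le_of_forall_pos_le_add
      intro ε hε
      have hl : (0:ℝ) < 2 * ε / B^2 := by positivity
      have := massart_mgf T hT hnorm hl
      rw [hlog] at this
      calc _ ≤ 0 / (2 * ε / B^2) + (2 * ε / B^2) * B^2 / 2 := this
        _ = ε := by field_simp; ring
        _ ≤ 0 + ε := by linarith
    have : (0:ℝ) ≤ B * Real.sqrt (2 * Real.log T.card) := by positivity
    linarith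
  · -- card ≥ 2
    have hM : (2:ℝ) ≤ (T.card : ℝ) := by exact_mod_cast h2
    have hlogpos : 0 < Real.log (T.card : ℝ) := Real.log_pos (by linarith)
    set L := Real.sqrt (2 * Real.log T.card) with hL
    have hLpos : 0 < L := Real.sqrt_pos.2 (by linarith)
    have hLsq : L^2 = 2 * Real.log T.card := Real.sq_sqrt (by linarith)
    have hl : (0:ℝ) < L / B := by positivity
    have := massart_mgf T hT hnorm hl
    calc (1 / 2^n : ℝ) * ∑ e : Fin n → Bool,
        T.sup' hT (fun t => ∑ i, (if e i then (1:ℝ) else -1) * t i)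
        ≤ Real.log T.card / (L / B) + (L / B) * B^2 / 2 := this
      _ = B * L := by
          field_simp
          nlinarith [hLsq]


lemma exists_net {n : ℕ} (S : Set (Fin n → ℝ))
    (hb : ∀ v ∈ S, ∀ i, v i ∈ Set.Icc (0:ℝ) (1/2)) {ε : ℝ} (hε : 0 < ε) :
    ∃ T : Finset (Fin n → ℝ), ↑T ⊆ S ∧ T.card = coverNum S ε ∧
      ∀ x ∈ S, ∃ t ∈ T, ∀ i, |x i - t i| ≤ ε := by
  classical
  have hne : {k : ℕ | ∃ 𝒯 : Finset (Fin n → ℝ), ↑𝒯 ⊆ S ∧ 𝒯.card = k ∧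
      ∀ x ∈ S, ∃ t ∈ 𝒯, ∀ i, |x i - t i| ≤ ε}.Nonempty := by
    have hsub : S ⊆ Set.pi Set.univ (fun _ : Fin n => Set.Icc (0:ℝ) (1/2)) := by
      intro v hv i _
      exact hb v hv i
    have htb : TotallyBounded S :=
      ((isCompact_univ_pi fun _ : Fin n => isCompact_Icc).totallyBounded).subset hsub
    obtain ⟨t, hts, htf, hcov⟩ := totallyBounded_iff_subset.1 htb _ (Metric.dist_mem_uniformity hε)
    refine ⟨htf.toFinset.card, htf.toFinset, by simpa using hts, rfl, ?_⟩
    intro x hx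
    obtain ⟨y, hy, hxy⟩ := Set.mem_iUnion₂.1 (hcov hx)
    refine ⟨y, htf.mem_toFinset.2 hy, fun i => ?_⟩
    have h1 : dist (x i) (y i) ≤ dist x y := dist_le_pi_dist x y i
    have h2 : dist x y < ε := hxy
    rw [Real.dist_eq] at h1
    linarith
  obtain ⟨T, h1, h2, h3⟩ := Nat.sInf_mem hne
  exact ⟨T, h1, h2, h3⟩

lemma coverNum_le {n : ℕ} {S : Set (Fin n → ℝ)} {ε : ℝ} (T : Finset (Fin n → ℝ))
    (h1 : ↑T ⊆ S) (h3 : ∀ x ∈ S, ∃ t ∈ T, ∀ i, |x i - t i| ≤ ε) :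
    coverNum S ε ≤ T.card :=
  Nat.sInf_le ⟨T, h1, rfl, h3⟩

lemma coverNum_anti {n : ℕ} {S : Set (Fin n → ℝ)}
    (hb : ∀ v ∈ S, ∀ i, v i ∈ Set.Icc (0:ℝ) (1/2)) {a b : ℝ} (ha : 0 < a) (hab : a ≤ b) :
    coverNum S b ≤ coverNum S a := by
  obtain ⟨T, h1, h2, h3⟩ := exists_net S hb ha
  rw [← h2]
  exact coverNum_le T h1 (fun x hx => by
    obtain ⟨t, ht, hd⟩ := h3 x hx
    exact ⟨t, ht, fun i => (hd i).trans hab⟩)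

lemma coverNum_pos {n : ℕ} {S : Set (Fin n → ℝ)}
    (hb : ∀ v ∈ S, ∀ i, v i ∈ Set.Icc (0:ℝ) (1/2)) (hS : S.Nonempty) {ε : ℝ} (hε : 0 < ε) :
    1 ≤ coverNum S ε := by
  obtain ⟨T, h1, h2, h3⟩ := exists_net S hb hε
  obtain ⟨v, hv⟩ := hS
  obtain ⟨t, ht, -⟩ := h3 v hv
  rw [← h2]
  exact Finset.card_pos.2 ⟨t, ht⟩

set_option maxHeartbeats 4000000 in
/-- Dudley entropy integral bound for the `‖·‖_{r,∞}`-covering (here the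
`ℓ∞`-covering of the empirical image class) of a function class with values in `[0, 1/2]`
containing the zero function. -/
theorem dudley_entropy_integral
    {𝔛 : Type*} {n : ℕ} (hn : 1 ≤ n) (X : Fin n → 𝔛)
    (F : Set (𝔛 → ℝ))
    (hrange : ∀ f ∈ F, ∀ x, f x ∈ Set.Icc (0 : ℝ) (1 / 2))
    (hzero : (fun _ => (0 : ℝ)) ∈ F) :
    ∀ ξ ∈ Set.Ioo (0 : ℝ) (1 / 2),
      empRademacher F X ≤ 4 * ξ + (12 / Real.sqrt n) *
        ∫ ε in ξ..(1 / 2), Real.sqrt (Real.log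
          (coverNum {v : Fin n → ℝ | ∃ f ∈ F, v = fun i => f (X i)} ε)) := by
  classical
  intro ξ hξ
  obtain ⟨hξ0, hξh⟩ := hξ
  set S := {v : Fin n → ℝ | ∃ f ∈ F, v = fun i => f (X i)} with hSdef
  have hb : ∀ v ∈ S, ∀ i, v i ∈ Set.Icc (0:ℝ) (1/2) := by
    rintro v ⟨f, hf, rfl⟩ i; exact hrange f hf (X i)
  have h0S : (fun _ : Fin n => (0:ℝ)) ∈ S := ⟨_, hzero, rfl⟩
  haveI : Nonempty F := ⟨⟨_, hzero⟩⟩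
  have hnR : (0:ℝ) < n := by exact_mod_cast hn
  have hsn : (0:ℝ) < Real.sqrt n := Real.sqrt_pos.2 hnR
  set g : ℝ → ℝ := fun ε => Real.sqrt (Real.log (coverNum S ε)) with hgdef
  have hgnn : ∀ x, 0 ≤ g x := fun x => Real.sqrt_nonneg _
  have hganti : AntitoneOn g (Set.Icc ξ (1/2)) := by
    intro a ha b hb' hab
    have h1 : coverNum S b ≤ coverNum S a := coverNum_anti hb (lt_of_lt_of_le hξ0 ha.1) hab
    have h2 : 1 ≤ coverNum S b := coverNum_pos hb ⟨_, h0S⟩ (lt_of_lt_of_le hξ0 (ha.1.trans hab))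
    apply Real.sqrt_le_sqrt
    apply Real.log_le_log (by exact_mod_cast h2) (by exact_mod_cast h1)
  have hgint : ∀ a b : ℝ, ξ ≤ a → b ≤ 1/2 → a ≤ b → IntervalIntegrable g volume a b := by
    intro a b ha hb' hab
    apply AntitoneOn.intervalIntegrable
    apply hganti.mono
    rw [Set.uIcc_of_le hab]
    exact Set.Icc_subset_Icc ha hb'
  have hInn : 0 ≤ ∫ ε in ξ..(1/2), g ε :=
    intervalIntegral.integral_nonneg (le_of_lt hξh) fun _ _ => hgnn _
  -- trivial bound
  have hR : empRademacher F X ≤ 1/2 := by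
    simp only [empRademacher]
    have hcard2 : (Fintype.card (Fin n → Bool) : ℝ) = 2^n := by simp [Fintype.card_fun]
    calc (1/2^n : ℝ) * ∑ e : Fin n → Bool,
          ⨆ f : F, (1/(n:ℝ)) * ∑ i, (if e i then (1:ℝ) else -1) * (f : 𝔛 → ℝ) (X i)
        ≤ (1/2^n : ℝ) * ∑ _e : Fin n → Bool, (1/2 : ℝ) := by
          apply mul_le_mul_of_nonneg_left _ (by positivity)
          apply Finset.sum_le_sum
          intro e _
          apply ciSup_le
          intro f
          have hsum : (∑ i, (if e i then (1:ℝ) else -1) * (f : 𝔛 → ℝ) (X i))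
              ≤ ∑ _i : Fin n, (1/2:ℝ) := by
            apply Finset.sum_le_sum
            intro i _
            have h01 := hrange f f.2 (X i)
            split_ifs with h
            · simpa using h01.2
            · nlinarith [h01.1, h01.2]
          rw [Finset.sum_const, Finset.card_univ, Fintype.card_fin, nsmul_eq_mul] at hsum
          calc (1/(n:ℝ)) * ∑ i, (if e i then (1:ℝ) else -1) * (f : 𝔛 → ℝ) (X i)
              ≤ (1/(n:ℝ)) * ((n:ℝ) * (1/2)) := by
                apply mul_le_mul_of_nonneg_left hsum (by positivity)
            _ = 1/2 := by field_simp
      _ = 1/2 := by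
          rw [Finset.sum_const, Finset.card_univ, nsmul_eq_mul, hcard2]
          field_simp
  by_cases hξ8 : (1:ℝ)/8 ≤ ξ
  · have h12 : (0:ℝ) ≤ 12 / Real.sqrt n := by positivity
    nlinarith [mul_nonneg h12 hInn]
  · push_neg at hξ8
    -- choose the number of chaining levels
    set εj : ℕ → ℝ := fun j => (1/2:ℝ)^(j+1) with hεdef
    have hεpos : ∀ j, 0 < εj j := fun j => by positivity
    have hhalf : ∀ j, εj (j+1) = εj j / 2 := by
      intro j; simp only [hεdef, pow_succ]; ring
    have hεanti : ∀ j k : ℕ, j ≤ k → εj k ≤ εj j := by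
      intro j k hjk
      exact pow_le_pow_of_le_one (by norm_num) (by norm_num) (by omega)
    have hKex : ∃ K : ℕ, 1 ≤ K ∧ ξ ≤ εj (K+1) ∧ εj K ≤ 4*ξ := by
      obtain ⟨m₁, hm₁⟩ := exists_pow_lt_of_lt_one (by linarith : (0:ℝ) < 2*ξ)
        (by norm_num : (1/2:ℝ) < 1)
      have hPex : ∃ m : ℕ, (1/2:ℝ)^m < 2*ξ := ⟨m₁, hm₁⟩
      have hm₀P : (1/2:ℝ)^(Nat.find hPex) < 2*ξ := Nat.find_spec hPex
      have hm₀min : ∀ k, k < Nat.find hPex → 2*ξ ≤ (1/2:ℝ)^k := by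
        intro k hk
        have := Nat.find_min hPex hk
        linarith [not_lt.1 this]
      have hm₀3 : 3 ≤ Nat.find hPex := by
        by_contra hcon
        push_neg at hcon
        have h2 : ((1:ℝ)/2)^2 ≤ (1/2:ℝ)^(Nat.find hPex) :=
          pow_le_pow_of_le_one (by norm_num) (by norm_num) (by omega)
        have h14 : ((1:ℝ)/2)^2 = 1/4 := by norm_num
        nlinarith
      refine ⟨Nat.find hPex - 2, by omega, ?_, ?_⟩
      · have h1 := hm₀min (Nat.find hPex - 1) (by omega)
        have he : Nat.find hPex - 2 + 1 + 1 = (Nat.find hPex - 1) + 1 := by omega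
        simp only [hεdef]
        rw [he, pow_succ]
        linarith
      · have he : Nat.find hPex - 2 + 1 + 1 = Nat.find hPex := by omega
        have hlt : (1/2:ℝ)^(Nat.find hPex - 2 + 1 + 1) < 2 * ξ := by rw [he]; exact hm₀P
        rw [pow_succ] at hlt
        simp only [hεdef]
        nlinarith [pow_pos (by norm_num : (0:ℝ) < 1/2) (Nat.find hPex - 2 + 1)]
    obtain ⟨K, hK1, hεK1ξ, hεK4ξ⟩ := hKex
    have hε0 : εj 0 = 1/2 := by simp [hεdef]
    -- nets
    choose T hTsub hTcard hTcov using fun j : ℕ => exists_net S hb (hεpos j)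
    choose c hcmem hcd using hTcov
    -- modified nets with T' 0 = {0}
    set T' : ℕ → Finset (Fin n → ℝ) :=
      fun j => if j = 0 then {(fun _ => (0:ℝ))} else T j with hT'def
    set c' : ∀ _j : ℕ, ∀ x : Fin n → ℝ, x ∈ S → (Fin n → ℝ) :=
      fun j x hx => if j = 0 then (fun _ => (0:ℝ)) else c j x hx with hc'def
    have hc'mem : ∀ j x (hx : x ∈ S), c' j x hx ∈ T' j := by
      intro j x hx
      simp only [hc'def, hT'def]
      split_ifs with h
      · exact Finset.mem_singleton_self _
      · exact hcmem j x hx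
    have hc'd : ∀ j x (hx : x ∈ S), ∀ i, |x i - c' j x hx i| ≤ εj j := by
      intro j x hx i
      simp only [hc'def]
      split_ifs with h
      · have := hb x hx i
        subst h
        rw [hε0]
        rw [abs_of_nonneg (by simpa using this.1)]
        simpa using this.2
      · exact hcd j x hx i
    have hT'card : ∀ j, (T' j).card ≤ coverNum S (εj (j+1)) := by
      intro j
      simp only [hT'def]
      split_ifs with h
      · rw [Finset.card_singleton]
        exact coverNum_pos hb ⟨_, h0S⟩ (hεpos _)
      · rw [hTcard]
        exact coverNum_anti hb (hεpos (j+1)) (hεanti j (j+1) (by omega))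
    -- difference sets
    set D : ℕ → Finset (Fin n → ℝ) := fun j =>
      ((T' (j+1) ×ˢ T' j).filter
        (fun p => ∀ i, |p.1 i - p.2 i| ≤ 3 * εj (j+1))).image
        (fun p => p.1 - p.2) with hDdef
    have hchainD : ∀ x (hx : x ∈ S) (j : ℕ), c' (j+1) x hx - c' j x hx ∈ D j := by
      intro x hx j
      simp only [hDdef]
      refine Finset.mem_image.2 ⟨(c' (j+1) x hx, c' j x hx), Finset.mem_filter.2
        ⟨Finset.mem_product.2 ⟨hc'mem _ _ hx, hc'mem _ _ hx⟩, ?_⟩, rfl⟩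
      intro i
      have h1 := hc'd (j+1) x hx i
      have h2 := hc'd j x hx i
      have h3 : εj j = 2 * εj (j+1) := by rw [hhalf j]; ring
      have h4 : |c' (j+1) x hx i - c' j x hx i| ≤
          |c' (j+1) x hx i - x i| + |x i - c' j x hx i| := abs_sub_le _ _ _
      rw [abs_sub_comm (c' (j+1) x hx i) (x i)] at h4
      linarith
    have hDne : ∀ j, (D j).Nonempty := fun j => ⟨_, hchainD _ h0S j⟩
    have hDnorm : ∀ j, ∀ u ∈ D j,
        (∑ i, (u i)^2) ≤ (3 * εj (j+1) * Real.sqrt n)^2 := by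
      intro j u hu
      simp only [hDdef] at hu
      obtain ⟨p, hp, rfl⟩ := Finset.mem_image.1 hu
      obtain ⟨-, hpd⟩ := Finset.mem_filter.1 hp
      calc (∑ i, ((p.1 - p.2) i)^2) ≤ ∑ _i : Fin n, (3*εj (j+1))^2 := by
            apply Finset.sum_le_sum
            intro i _
            have habs : |(p.1 - p.2) i| ≤ 3 * εj (j+1) := by
              simpa [Pi.sub_apply] using hpd i
            calc ((p.1 - p.2) i)^2 = |(p.1 - p.2) i|^2 := (sq_abs _).symm
              _ ≤ (3*εj (j+1))^2 := by
                  apply pow_le_pow_left₀ (abs_nonneg _) habs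
        _ = (n:ℝ) * (3*εj (j+1))^2 := by
            rw [Finset.sum_const, Finset.card_univ, Fintype.card_fin, nsmul_eq_mul]
        _ = (3 * εj (j+1) * Real.sqrt n)^2 := by
            have hss : Real.sqrt (n:ℝ) ^ 2 = (n:ℝ) := Real.sq_sqrt hnR.le
            nlinarith [hss]
    have hDcard : ∀ j, ((D j).card : ℝ) ≤
        (coverNum S (εj (j+1)) : ℝ) * (coverNum S (εj (j+1)) : ℝ) := by
      intro j
      have h1 : (D j).card ≤ coverNum S (εj (j+1)) * coverNum S (εj (j+1)) := by
        simp only [hDdef]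
        calc (((T' (j+1) ×ˢ T' j).filter
              (fun p => ∀ i, |p.1 i - p.2 i| ≤ 3 * εj (j+1))).image
              (fun p => p.1 - p.2)).card
            ≤ ((T' (j+1) ×ˢ T' j).filter
              (fun p => ∀ i, |p.1 i - p.2 i| ≤ 3 * εj (j+1))).card :=
              Finset.card_image_le
          _ ≤ (T' (j+1) ×ˢ T' j).card := Finset.card_filter_le _ _
          _ = (T' (j+1)).card * (T' j).card := Finset.card_product _ _
          _ ≤ coverNum S (εj (j+1)) * coverNum S (εj (j+1)) := by
              have hfst : (T' (j+1)).card = coverNum S (εj (j+1)) := by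
                simp only [hT'def, if_neg (Nat.succ_ne_zero j)]
                exact hTcard (j+1)
              rw [hfst]
              exact Nat.mul_le_mul_left _ (hT'card j)
      exact_mod_cast h1
    -- chaining per sign vector
    have hkey : ∀ e : Fin n → Bool,
        (⨆ f : F, (1/(n:ℝ)) * ∑ i, (if e i then (1:ℝ) else -1) * (f : 𝔛 → ℝ) (X i))
        ≤ εj K + (1/(n:ℝ)) * ∑ j ∈ Finset.range K,
            (D j).sup' (hDne j) (fun u => ∑ i, (if e i then (1:ℝ) else -1) * u i) := by
      intro e
      apply ciSup_le
      intro f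
      have hv : (fun i => (f : 𝔛 → ℝ) (X i)) ∈ S := ⟨f, f.2, rfl⟩
      set v : Fin n → ℝ := fun i => (f : 𝔛 → ℝ) (X i) with hvdef
      set t : ℕ → (Fin n → ℝ) := fun j => c' j v hv with htdef
      set h : (Fin n → ℝ) → ℝ := fun w => ∑ i, (if e i then (1:ℝ) else -1) * w i with hhdef
      have hsub : ∀ w w' : Fin n → ℝ, h (w - w') = h w - h w' := by
        intro w w'
        simp only [hhdef, ← Finset.sum_sub_distrib]
        exact Finset.sum_congr rfl fun i _ => by simp only [Pi.sub_apply]; ring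
      have ht0 : h (t 0) = 0 := by
        simp only [htdef, hc'def, hhdef, if_pos rfl]
        simp
      have htel : (∑ j ∈ Finset.range K, (h (t (j+1)) - h (t j))) = h (t K) - h (t 0) :=
        Finset.sum_range_sub (fun j => h (t j)) K
      have hlink : ∀ j, h (t (j+1)) - h (t j) ≤ (D j).sup' (hDne j) h := by
        intro j
        rw [← hsub]
        exact Finset.le_sup' h (hchainD v hv j)
      have hhead : h (v - t K) ≤ (n:ℝ) * εj K := by
        simp only [hhdef]
        calc (∑ i, (if e i then (1:ℝ) else -1) * (v - t K) i)
            ≤ ∑ i, |(v - t K) i| := by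
              apply Finset.sum_le_sum
              intro i _
              split_ifs
              · rw [one_mul]; exact le_abs_self _
              · rw [neg_one_mul]; exact neg_le_abs _
          _ ≤ ∑ _i : Fin n, εj K := by
              apply Finset.sum_le_sum
              intro i _
              rw [Pi.sub_apply]
              exact hc'd K v hv i
          _ = (n:ℝ) * εj K := by
              rw [Finset.sum_const, Finset.card_univ, Fintype.card_fin, nsmul_eq_mul]
      have hdecomp : h v = h (v - t K) +
          (∑ j ∈ Finset.range K, (h (t (j+1)) - h (t j))) + h (t 0) := by
        rw [htel, hsub]
        ring
      have hbound : h v ≤ (n:ℝ) * εj K + ∑ j ∈ Finset.range K, (D j).sup' (hDne j) h := by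
        rw [hdecomp, ht0, add_zero]
        have hs := Finset.sum_le_sum (fun j (_ : j ∈ Finset.range K) => hlink j)
        linarith
      have hgoal : (1/(n:ℝ)) * h v ≤ εj K + (1/(n:ℝ)) * ∑ j ∈ Finset.range K,
          (D j).sup' (hDne j) h := by
        calc (1/(n:ℝ)) * h v
            ≤ (1/(n:ℝ)) * ((n:ℝ) * εj K + ∑ j ∈ Finset.range K, (D j).sup' (hDne j) h) :=
              mul_le_mul_of_nonneg_left hbound (by positivity)
          _ = εj K + (1/(n:ℝ)) * ∑ j ∈ Finset.range K, (D j).sup' (hDne j) h := by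
              rw [mul_add]
              congr 1
              field_simp
      exact hgoal
    -- average over sign vectors and apply Massart
    have hcard2 : (Fintype.card (Fin n → Bool) : ℝ) = 2^n := by simp [Fintype.card_fun]
    set Mj : ℕ → ℝ := fun j => Real.sqrt (Real.log (coverNum S (εj (j+1)))) with hMjdef
    have hMjnn : ∀ j, 0 ≤ Mj j := fun j => Real.sqrt_nonneg _
    have hmas : ∀ j, (1/2^n : ℝ) * ∑ e : Fin n → Bool,
        (D j).sup' (hDne j) (fun u => ∑ i, (if e i then (1:ℝ) else -1) * u i)
        ≤ 6 * εj (j+1) * Real.sqrt n * Mj j := by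
      intro j
      have hB : (0:ℝ) < 3 * εj (j+1) * Real.sqrt n := by positivity
      have hmassart := massart (D j) (hDne j) hB (hDnorm j)
      refine hmassart.trans ?_
      have hN1 : (1:ℝ) ≤ (coverNum S (εj (j+1)) : ℝ) := by
        exact_mod_cast coverNum_pos hb ⟨_, h0S⟩ (hεpos _)
      have hc1 : (1:ℝ) ≤ ((D j).card : ℝ) := by exact_mod_cast (hDne j).card_pos
      have hlogN0 : 0 ≤ Real.log (coverNum S (εj (j+1))) := Real.log_nonneg hN1
      have hlog : Real.log ((D j).card) ≤ 2 * Real.log (coverNum S (εj (j+1))) := by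
        calc Real.log ((D j).card)
            ≤ Real.log ((coverNum S (εj (j+1)) : ℝ) * (coverNum S (εj (j+1)) : ℝ)) :=
              Real.log_le_log (by linarith) (hDcard j)
          _ = 2 * Real.log (coverNum S (εj (j+1))) := by
              rw [Real.log_mul (by linarith) (by linarith)]; ring
      have hsq : Real.sqrt (2 * Real.log ((D j).card)) ≤ 2 * Mj j := by
        have h4 : Real.sqrt (2 * Real.log ((D j).card))
            ≤ Real.sqrt (4 * Real.log (coverNum S (εj (j+1)))) :=
          Real.sqrt_le_sqrt (by linarith)
        have h5 : Real.sqrt (4 * Real.log (coverNum S (εj (j+1)))) = 2 * Mj j := by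
          rw [show (4:ℝ) * Real.log (coverNum S (εj (j+1)))
              = (2:ℝ)^2 * Real.log (coverNum S (εj (j+1))) by ring]
          rw [Real.sqrt_mul (by positivity), hMjdef]
          rw [Real.sqrt_sq (by norm_num : (0:ℝ) ≤ 2)]
        rw [← h5]; exact h4
      calc 3 * εj (j+1) * Real.sqrt n * Real.sqrt (2 * Real.log ((D j).card))
          ≤ 3 * εj (j+1) * Real.sqrt n * (2 * Mj j) :=
            mul_le_mul_of_nonneg_left hsq hB.le
        _ = 6 * εj (j+1) * Real.sqrt n * Mj j := by ring
    have hstep : empRademacher F X ≤ εj K +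
        (6/Real.sqrt n) * ∑ j ∈ Finset.range K, εj (j+1) * Mj j := by
      simp only [empRademacher]
      have h1 : (1/2^n : ℝ) * ∑ e : Fin n → Bool,
          (⨆ f : F, (1/(n:ℝ)) * ∑ i, (if e i then (1:ℝ) else -1) * (f : 𝔛 → ℝ) (X i))
          ≤ (1/2^n : ℝ) * ∑ e : Fin n → Bool, (εj K + (1/(n:ℝ)) * ∑ j ∈ Finset.range K,
            (D j).sup' (hDne j) (fun u => ∑ i, (if e i then (1:ℝ) else -1) * u i)) :=
        mul_le_mul_of_nonneg_left (Finset.sum_le_sum fun e _ => hkey e) (by positivity)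
      have h2 : (1/2^n : ℝ) * ∑ e : Fin n → Bool, (εj K + (1/(n:ℝ)) * ∑ j ∈ Finset.range K,
            (D j).sup' (hDne j) (fun u => ∑ i, (if e i then (1:ℝ) else -1) * u i))
          = εj K + (1/(n:ℝ)) * ∑ j ∈ Finset.range K, ((1/2^n : ℝ) * ∑ e : Fin n → Bool,
            (D j).sup' (hDne j) (fun u => ∑ i, (if e i then (1:ℝ) else -1) * u i)) := by
        rw [Finset.sum_add_distrib, Finset.sum_const, Finset.card_univ, nsmul_eq_mul,
          hcard2, mul_add]
        congr 1
        · field_simp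
        · rw [← Finset.mul_sum, ← Finset.mul_sum, Finset.sum_comm]
          ring
      rw [h2] at h1
      refine h1.trans ?_
      have h3 : (1/(n:ℝ)) * ∑ j ∈ Finset.range K, ((1/2^n : ℝ) * ∑ e : Fin n → Bool,
            (D j).sup' (hDne j) (fun u => ∑ i, (if e i then (1:ℝ) else -1) * u i))
          ≤ (1/(n:ℝ)) * ∑ j ∈ Finset.range K, 6 * εj (j+1) * Real.sqrt n * Mj j :=
        mul_le_mul_of_nonneg_left (Finset.sum_le_sum fun j _ => hmas j) (by positivity)
      have h4 : (1/(n:ℝ)) * ∑ j ∈ Finset.range K, 6 * εj (j+1) * Real.sqrt n * Mj j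
          = (6/Real.sqrt n) * ∑ j ∈ Finset.range K, εj (j+1) * Mj j := by
        rw [Finset.mul_sum, Finset.mul_sum]
        refine Finset.sum_congr rfl fun j _ => ?_
        have hss : Real.sqrt (n:ℝ) * Real.sqrt (n:ℝ) = (n:ℝ) := Real.mul_self_sqrt hnR.le
        field_simp
        linear_combination (εj (j+1) * Mj j) * hss
      linarith
    -- integral lower bounds
    have hpiece : ∀ j, j < K → εj (j+1) * Mj j / 2 ≤ ∫ ε in (εj (j+2))..(εj (j+1)), g ε := by
      intro j hj
      have hab : εj (j+2) ≤ εj (j+1) := hεanti _ _ (by omega)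
      have haξ : ξ ≤ εj (j+2) := hεK1ξ.trans (hεanti (j+2) (K+1) (by omega))
      have hbξ : ξ ≤ εj (j+1) := hεK1ξ.trans (hεanti (j+1) (K+1) (by omega))
      have hbh : εj (j+1) ≤ 1/2 := by rw [← hε0]; exact hεanti 0 (j+1) (by omega)
      have hgj : g (εj (j+1)) = Mj j := rfl
      have hconst : (∫ _ε in (εj (j+2))..(εj (j+1)), Mj j) = (εj (j+1) - εj (j+2)) * Mj j := by
        rw [intervalIntegral.integral_const, smul_eq_mul]
      have hmono : (∫ _ε in (εj (j+2))..(εj (j+1)), Mj j) ≤ ∫ ε in (εj (j+2))..(εj (j+1)), g ε := by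
        apply intervalIntegral.integral_mono_on hab intervalIntegrable_const
          (hgint _ _ haξ hbh hab)
        intro x hx
        rw [← hgj]
        exact hganti ⟨haξ.trans hx.1, hx.2.trans hbh⟩ ⟨hbξ, hbh⟩ hx.2
      have hd : εj (j+1) - εj (j+2) = εj (j+1)/2 := by rw [hhalf (j+1)]; ring
      calc εj (j+1) * Mj j / 2 = (εj (j+1) - εj (j+2)) * Mj j := by rw [hd]; ring
        _ = _ := hconst.symm
        _ ≤ _ := hmono
    have hsum_eq : ∀ m : ℕ, m ≤ K →
        (∑ j ∈ Finset.range m, ∫ ε in (εj (j+2))..(εj (j+1)), g ε)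
          = ∫ ε in (εj (m+1))..(εj 1), g ε := by
      intro m
      induction m with
      | zero => intro _; simp
      | succ m ih =>
        intro hm
        rw [Finset.sum_range_succ, ih (by omega), add_comm]
        apply intervalIntegral.integral_add_adjacent_intervals
        · exact hgint _ _ (hεK1ξ.trans (hεanti (m+2) (K+1) (by omega)))
            (by rw [← hε0]; exact hεanti 0 (m+1) (by omega)) (hεanti _ _ (by omega))
        · exact hgint _ _ (hεK1ξ.trans (hεanti (m+1) (K+1) (by omega)))
            (by rw [← hε0]; exact hεanti 0 1 (by omega)) (hεanti _ _ (by omega))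
    have hε1h : εj 1 ≤ 1/2 := by rw [← hε0]; exact hεanti 0 1 (by omega)
    have hξε1 : ξ ≤ εj 1 := hεK1ξ.trans (hεanti 1 (K+1) (by omega))
    have hIsum : (∑ j ∈ Finset.range K, ∫ ε in (εj (j+2))..(εj (j+1)), g ε)
        ≤ ∫ ε in ξ..(1/2), g ε := by
      rw [hsum_eq K le_rfl]
      have hεK1h : εj (K+1) ≤ 1/2 := by rw [← hε0]; exact hεanti 0 (K+1) (by omega)
      have hi1 : IntervalIntegrable g volume ξ (εj (K+1)) := hgint _ _ le_rfl hεK1h hεK1ξ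
      have hi2 : IntervalIntegrable g volume (εj (K+1)) (εj 1) :=
        hgint _ _ hεK1ξ hε1h (hεanti 1 (K+1) (by omega))
      have hi12 : IntervalIntegrable g volume ξ (εj 1) := hgint _ _ le_rfl hε1h hξε1
      have hi3 : IntervalIntegrable g volume (εj 1) (1/2) := hgint _ _ hξε1 le_rfl hε1h
      have e1 : (∫ ε in ξ..(εj (K+1)), g ε) + (∫ ε in (εj (K+1))..(εj 1), g ε)
          = ∫ ε in ξ..(εj 1), g ε :=
        intervalIntegral.integral_add_adjacent_intervals hi1 hi2
      have e2 : (∫ ε in ξ..(εj 1), g ε) + (∫ ε in (εj 1)..(1/2), g ε)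
          = ∫ ε in ξ..(1/2), g ε :=
        intervalIntegral.integral_add_adjacent_intervals hi12 hi3
      have hn1 : 0 ≤ ∫ ε in ξ..(εj (K+1)), g ε :=
        intervalIntegral.integral_nonneg hεK1ξ (fun _ _ => hgnn _)
      have hn2 : 0 ≤ ∫ ε in (εj 1)..(1/2), g ε :=
        intervalIntegral.integral_nonneg hε1h (fun _ _ => hgnn _)
      rw [← e2, ← e1]
      linarith
    have hsumb : (∑ j ∈ Finset.range K, εj (j+1) * Mj j) ≤ 2 * ∫ ε in ξ..(1/2), g ε := by
      have h1 : (∑ j ∈ Finset.range K, εj (j+1) * Mj j)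
          ≤ ∑ j ∈ Finset.range K, 2 * ∫ ε in (εj (j+2))..(εj (j+1)), g ε := by
        apply Finset.sum_le_sum
        intro j hj
        have := hpiece j (Finset.mem_range.1 hj)
        linarith
      rw [← Finset.mul_sum] at h1
      linarith
    have h6 : (6/Real.sqrt n) * (∑ j ∈ Finset.range K, εj (j+1) * Mj j)
        ≤ (6/Real.sqrt n) * (2 * ∫ ε in ξ..(1/2), g ε) :=
      mul_le_mul_of_nonneg_left hsumb (by positivity)
    calc empRademacher F X
        ≤ εj K + (6/Real.sqrt n) * ∑ j ∈ Finset.range K, εj (j+1) * Mj j := hstep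
      _ ≤ 4*ξ + (12/Real.sqrt n) * ∫ ε in ξ..(1/2), g ε := by
          have h7 : (6/Real.sqrt n) * (2 * ∫ ε in ξ..(1/2), g ε)
              = (12/Real.sqrt n) * ∫ ε in ξ..(1/2), g ε := by ring
          linarith
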